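/- (Per-round regret bound in the proof of Theorem 1.) Let M be a real symmetric positive definite d×d matrix, α ≥ 0, and θ*, θ̂, x*, x, x' ∈ ℝ^d. Write ‖v‖_{M⁻¹} = √(vᵀ M⁻¹ v) and ‖v‖_M = √(vᵀ M v). Assume: (i) ‖θ* − θ̂‖_M ≤ α; (ii) (x* − x)ᵀ θ̂ ≤ α ‖x* − x‖_{M⁻¹} and (x* − x')ᵀ θ̂ ≤ α ‖x* − x'‖_{M⁻¹}; (iii) ‖x* − x‖_{M⁻¹} ≤ ‖x − x'‖_{M⁻¹} and ‖x* − x'‖_{M⁻¹} ≤ ‖x − x'‖_{M⁻¹}. Then (x* − x)ᵀ θ* + (x* − x')ᵀ θ* ≤ 4 α ‖x − x'‖_{M⁻¹}; equivalently, the instantaneous dueling regret r = x*ᵀθ* − (xᵀθ* + x'ᵀθ*)/2 satisfies r ≤ 2α ‖x − x'‖_{M⁻¹}. -/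

import Mathlib

open Matrix

private lemma dot_cs (d : ℕ) (a b : Fin d → ℝ) :
    a ⬝ᵥ b ≤ Real.sqrt (a ⬝ᵥ a) * Real.sqrt (b ⬝ᵥ b) := by
  have h := Finset.sum_mul_sq_le_sq_mul_sq Finset.univ a b
  have h1 : a ⬝ᵥ b ≤ |a ⬝ᵥ b| := le_abs_self _
  have h2 : |a ⬝ᵥ b| = Real.sqrt ((a ⬝ᵥ b) ^ 2) := (Real.sqrt_sq_eq_abs _).symm
  calc a ⬝ᵥ b ≤ Real.sqrt ((a ⬝ᵥ b) ^ 2) := by rw [← h2]; exact h1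
    _ ≤ Real.sqrt ((a ⬝ᵥ a) * (b ⬝ᵥ b)) := by
        apply Real.sqrt_le_sqrt
        simpa [dotProduct, sq] using h
    _ = Real.sqrt (a ⬝ᵥ a) * Real.sqrt (b ⬝ᵥ b) := Real.sqrt_mul (by
        simpa [dotProduct, sq] using Finset.sum_nonneg fun i _ => mul_self_nonneg (a i))
        _

open scoped MatrixOrder in
/-- Cauchy–Schwarz for a positive semidefinite bilinear form. -/
private lemma form_cs (d : ℕ) (N : Matrix (Fin d) (Fin d) ℝ) (hN : N.PosSemidef)
    (a b : Fin d → ℝ) :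
    a ⬝ᵥ N *ᵥ b ≤ Real.sqrt (a ⬝ᵥ N *ᵥ a) * Real.sqrt (b ⬝ᵥ N *ᵥ b) := by
  set S := CFC.sqrt N with hS
  have hsym : Sᵀ = S := by
    have h := (CFC.sqrt_nonneg N).posSemidef.1
    rwa [Matrix.IsHermitian, Matrix.conjTranspose_eq_transpose_of_trivial] at h
  have hmul : ∀ u w : Fin d → ℝ, u ⬝ᵥ N *ᵥ w = (S *ᵥ u) ⬝ᵥ (S *ᵥ w) := by
    intro u w
    rw [← CFC.sqrt_mul_sqrt_self N hN.nonneg, ← hS, ← Matrix.mulVec_mulVec, Matrix.dotProduct_mulVec u S,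
      ← Matrix.mulVec_transpose, hsym]
  rw [hmul, hmul, hmul]
  exact dot_cs d _ _

/-- `v ⬝ᵥ w ≤ ‖v‖_{M⁻¹} ‖w‖_M` for positive definite `M`. -/
private lemma dot_le (d : ℕ) (M : Matrix (Fin d) (Fin d) ℝ) (hM : M.PosDef)
    (v w : Fin d → ℝ) :
    v ⬝ᵥ w ≤ Real.sqrt (v ⬝ᵥ M⁻¹ *ᵥ v) * Real.sqrt (w ⬝ᵥ M *ᵥ w) := by
  have hinv : (M⁻¹).PosDef := hM.inv
  have hI : M⁻¹ * M = 1 := Matrix.nonsing_inv_mul M hM.det_pos.ne'.isUnit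
  have key := form_cs d M⁻¹ hinv.posSemidef v (M *ᵥ w)
  have e1 : v ⬝ᵥ M⁻¹ *ᵥ (M *ᵥ w) = v ⬝ᵥ w := by
    rw [Matrix.mulVec_mulVec, hI, Matrix.one_mulVec]
  have hMsym : Mᵀ = M := by
    have h := hM.isHermitian
    rwa [Matrix.IsHermitian, Matrix.conjTranspose_eq_transpose_of_trivial] at h
  have e2 : (M *ᵥ w) ⬝ᵥ M⁻¹ *ᵥ (M *ᵥ w) = w ⬝ᵥ M *ᵥ w := by
    rw [Matrix.mulVec_mulVec, hI, Matrix.one_mulVec, Matrix.dotProduct_mulVec w M,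
      ← Matrix.mulVec_transpose, hMsym]
  rw [e1, e2] at key
  exact key

/-- Per-round regret bound in the proof of Theorem 1: under the confidence
bound `‖θ* − θ̂‖_M ≤ α`, the candidate-set conditions
`(x* − x)ᵀθ̂ ≤ α‖x* − x‖_{M⁻¹}`, `(x* − x')ᵀθ̂ ≤ α‖x* − x'‖_{M⁻¹}`, and the
max-informative-pair conditions `‖x* − x‖_{M⁻¹} ≤ ‖x − x'‖_{M⁻¹}`,
`‖x* − x'‖_{M⁻¹} ≤ ‖x − x'‖_{M⁻¹}`, one has
`(x* − x)ᵀθ* + (x* − x')ᵀθ* ≤ 4α‖x − x'‖_{M⁻¹}`; equivalently the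
instantaneous dueling regret `r = x*ᵀθ* − (xᵀθ* + x'ᵀθ*)/2` satisfies
`r ≤ 2α‖x − x'‖_{M⁻¹}`. -/
theorem stmt_17 (d : ℕ) (M : Matrix (Fin d) (Fin d) ℝ) (hM : M.PosDef)
    (α : ℝ) (hα : 0 ≤ α) (θs θh xs x x' : Fin d → ℝ)
    (h1 : Real.sqrt ((θs - θh) ⬝ᵥ M *ᵥ (θs - θh)) ≤ α)
    (h2 : (xs - x) ⬝ᵥ θh ≤ α * Real.sqrt ((xs - x) ⬝ᵥ M⁻¹ *ᵥ (xs - x)))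
    (h2' : (xs - x') ⬝ᵥ θh ≤ α * Real.sqrt ((xs - x') ⬝ᵥ M⁻¹ *ᵥ (xs - x')))
    (h3 : Real.sqrt ((xs - x) ⬝ᵥ M⁻¹ *ᵥ (xs - x)) ≤
      Real.sqrt ((x - x') ⬝ᵥ M⁻¹ *ᵥ (x - x')))
    (h3' : Real.sqrt ((xs - x') ⬝ᵥ M⁻¹ *ᵥ (xs - x')) ≤
      Real.sqrt ((x - x') ⬝ᵥ M⁻¹ *ᵥ (x - x'))) :
    ((xs - x) ⬝ᵥ θs + (xs - x') ⬝ᵥ θs ≤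
        4 * α * Real.sqrt ((x - x') ⬝ᵥ M⁻¹ *ᵥ (x - x'))) ∧
      xs ⬝ᵥ θs - (x ⬝ᵥ θs + x' ⬝ᵥ θs) / 2 ≤
        2 * α * Real.sqrt ((x - x') ⬝ᵥ M⁻¹ *ᵥ (x - x')) := by
  set N := Real.sqrt ((x - x') ⬝ᵥ M⁻¹ *ᵥ (x - x')) with hN
  have key : ∀ v : Fin d → ℝ,
      v ⬝ᵥ θh ≤ α * Real.sqrt (v ⬝ᵥ M⁻¹ *ᵥ v) →
      Real.sqrt (v ⬝ᵥ M⁻¹ *ᵥ v) ≤ N →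
      v ⬝ᵥ θs ≤ 2 * α * N := by
    intro v hv2 hv3
    have hd : v ⬝ᵥ (θs - θh) ≤
        Real.sqrt (v ⬝ᵥ M⁻¹ *ᵥ v) * Real.sqrt ((θs - θh) ⬝ᵥ M *ᵥ (θs - θh)) :=
      dot_le d M hM v (θs - θh)
    have hnn : 0 ≤ Real.sqrt (v ⬝ᵥ M⁻¹ *ᵥ v) := Real.sqrt_nonneg _
    have h0N : 0 ≤ N := Real.sqrt_nonneg _
    have hb : Real.sqrt (v ⬝ᵥ M⁻¹ *ᵥ v) * Real.sqrt ((θs - θh) ⬝ᵥ M *ᵥ (θs - θh))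
        ≤ N * α := mul_le_mul hv3 h1 (Real.sqrt_nonneg _) h0N
    have hsplit : v ⬝ᵥ θs = v ⬝ᵥ θh + v ⬝ᵥ (θs - θh) := by
      simp [dotProduct_sub]
    have h2a : α * Real.sqrt (v ⬝ᵥ M⁻¹ *ᵥ v) ≤ α * N :=
      mul_le_mul_of_nonneg_left hv3 hα
    nlinarith [hsplit, hd, hb, h2a, hv2]
  have k1 := key (xs - x) h2 h3
  have k2 := key (xs - x') h2' h3'
  constructor
  · linarith
  · have e1 : (xs - x) ⬝ᵥ θs = xs ⬝ᵥ θs - x ⬝ᵥ θs := sub_dotProduct xs x θs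
    have e2 : (xs - x') ⬝ᵥ θs = xs ⬝ᵥ θs - x' ⬝ᵥ θs := sub_dotProduct xs x' θs
    linarith
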